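/- Uniqueness of the trivial solution of the tangent equation (Proposition on tan_m): let m ≥ 1 be an integer, s a generalized sine function of order m, and write tan_m(x) := s(x)/s'(x) wherever s'(x) ≠ 0. Suppose φ, ζ ∈ ℝ satisfy s'(φ) ≠ 0, s'(ζ + φ) ≠ 0 and |ζ| < π_m. If tan_m(ζ + φ) − tan_m(φ) = ζ, then ζ = 0. -/

import Mathlib

open Set MeasureTheory Filter Topology

/-- A generalized sine function of order `m ≥ 1`: a twice continuously differentiable
function `s : ℝ → ℝ` with `s'' = -m * s^(2m-1)`, `s 0 = 0` and `s' 0 = 1`. -/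
def IsGenSine (m : ℕ) (s : ℝ → ℝ) : Prop :=
  ContDiff ℝ 2 s ∧ (∀ x : ℝ, deriv (deriv s) x = -(m : ℝ) * s x ^ (2 * m - 1)) ∧
    s 0 = 0 ∧ deriv s 0 = 1

/-- The generalized half-period `π_m := 2 ∫₀¹ (1 - t^(2m))^(-1/2) dt`. -/
noncomputable def piGen (m : ℕ) : ℝ :=
  2 * ∫ t in (0:ℝ)..(1:ℝ), ((1 - t ^ (2 * m) : ℝ) ^ (-(1:ℝ)/2))

/-- integrand -/
noncomputable def gI (m : ℕ) : ℝ → ℝ := fun t => (Real.sqrt (1 - t ^ (2 * m)))⁻¹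

lemma rpow_neg_half_eq (a : ℝ) : a ^ (-(1:ℝ)/2) = (Real.sqrt a)⁻¹ := by
  rcases lt_or_ge a 0 with ha | ha
  · rw [Real.rpow_def_of_neg ha]
    have h1 : Real.cos (-(1:ℝ)/2 * Real.pi) = 0 := by
      rw [show (-(1:ℝ)/2 * Real.pi) = -(Real.pi/2) by ring, Real.cos_neg, Real.cos_pi_div_two]
    rw [h1, mul_zero, Real.sqrt_eq_zero'.mpr ha.le, inv_zero]
  · rw [show (-(1:ℝ)/2) = -(1/2 : ℝ) by ring, Real.rpow_neg ha, Real.sqrt_eq_rpow]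

lemma gI_even (m : ℕ) (t : ℝ) : gI m (-t) = gI m t := by
  simp [gI, (even_two_mul m).neg_pow]

lemma gI_nonneg (m : ℕ) (t : ℝ) : 0 ≤ gI m t := inv_nonneg.mpr (Real.sqrt_nonneg _)

lemma pow2m_lt_one {m : ℕ} (hm : 1 ≤ m) {u : ℝ} (h1 : -1 < u) (h2 : u < 1) :
    u ^ (2*m) < 1 := by
  have habs : |u| < 1 := abs_lt.mpr ⟨h1, h2⟩
  have h := pow_lt_one₀ (abs_nonneg u) habs (n := 2*m) (by omega)
  calc u ^ (2*m) ≤ |u ^ (2*m)| := le_abs_self _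
    _ = |u| ^ (2*m) := (pow_abs u _).symm
    _ < 1 := h

lemma neg_one_lt_of_pow {m : ℕ} {u : ℝ} (h : u ^ (2*m) < 1) : -1 < u ∧ u < 1 := by
  by_contra hcon
  have heven : 0 ≤ u ^ (2*m) := (even_two_mul m).pow_nonneg u
  have habs : 1 ≤ |u| := by
    by_contra h'
    push_neg at h'
    exact hcon (abs_lt.mp h')
  have h2 : (1:ℝ) ≤ u ^ (2*m) := by
    calc (1:ℝ) ≤ |u| ^ (2*m) := one_le_pow₀ habs
      _ = |u ^ (2*m)| := pow_abs u _
      _ = u ^ (2*m) := abs_of_nonneg heven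
  linarith

lemma gI_meas (m : ℕ) : Measurable (gI m) :=
  ((Real.continuous_sqrt.comp (continuous_const.sub (continuous_pow (2*m)))).measurable).inv

lemma gI_int01 {m : ℕ} (hm : 1 ≤ m) : IntervalIntegrable (gI m) volume 0 1 := by
  have hb : IntervalIntegrable (fun x : ℝ => (1 - x) ^ (-(1:ℝ)/2)) volume 0 1 := by
    have h0 := intervalIntegral.intervalIntegrable_rpow' (r := -(1:ℝ)/2) (a := 0) (b := 1)
      (by norm_num)
    have h1 := h0.comp_sub_left 1
    simpa using h1.symm
  apply hb.mono_fun (gI_meas m).aestronglyMeasurable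
  filter_upwards [MeasureTheory.ae_restrict_mem measurableSet_uIoc] with x hx
  rw [Set.uIoc_of_le (by norm_num : (0:ℝ) ≤ 1)] at hx
  have hx0 : 0 < x := hx.1
  have hx1 : x ≤ 1 := hx.2
  have hrnn : (0:ℝ) ≤ (1 - x) ^ (-(1:ℝ)/2) := Real.rpow_nonneg (by linarith) _
  rw [Real.norm_eq_abs, Real.norm_eq_abs, abs_of_nonneg (gI_nonneg m x), abs_of_nonneg hrnn,
    rpow_neg_half_eq]
  rcases eq_or_lt_of_le hx1 with rfl | hlt
  · simp [gI]
  · have h2 : 0 < 1 - x := by linarith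
    have hle : 1 - x ≤ 1 - x ^ (2*m) := by
      have : x ^ (2*m) ≤ x := by
        calc x ^ (2*m) ≤ x ^ 1 := pow_le_pow_of_le_one hx0.le hx1 (by omega)
          _ = x := pow_one x
      linarith
    exact inv_anti₀ (Real.sqrt_pos.mpr h2) (Real.sqrt_le_sqrt hle)

lemma gI_intInt {m : ℕ} (hm : 1 ≤ m) {a b : ℝ} (ha : -1 ≤ a) (ha' : a ≤ 1)
    (hb : -1 ≤ b) (hb' : b ≤ 1) : IntervalIntegrable (gI m) volume a b := by
  have h01 := gI_int01 hm
  have hneg : IntervalIntegrable (gI m) volume (-1) 0 := by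
    have h2 := (IntervalIntegrable.iff_comp_neg (by simp)).mp h01
    rw [show (fun x => gI m (-x)) = gI m from funext (gI_even m)] at h2
    simpa using h2.symm
  refine (hneg.trans h01).mono_set ?_
  rw [Set.uIcc_of_le (by norm_num : (-1:ℝ) ≤ 1)]
  exact Set.uIcc_subset_Icc ⟨ha, ha'⟩ ⟨hb, hb'⟩

lemma piGen_eq {m : ℕ} (hm : 1 ≤ m) : piGen m = ∫ t in (-1:ℝ)..1, gI m t := by
  have hio : (∫ t in (0:ℝ)..1, ((1 - t ^ (2*m) : ℝ) ^ (-(1:ℝ)/2))) = ∫ t in (0:ℝ)..1, gI m t :=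
    intervalIntegral.integral_congr (fun t _ => rpow_neg_half_eq _)
  have hrefl : (∫ t in (-1:ℝ)..(0:ℝ), gI m t) = ∫ t in (0:ℝ)..1, gI m t := by
    have h := intervalIntegral.integral_comp_neg (a := (0:ℝ)) (b := 1) (f := gI m)
    simp only [gI_even, neg_zero, neg_neg] at h
    simpa using h.symm
  have hadd := intervalIntegral.integral_add_adjacent_intervals
      (gI_intInt hm (by norm_num) (by norm_num) (by norm_num) (by norm_num) : IntervalIntegrable (gI m) volume (-1) 0)
      (gI_intInt hm (by norm_num) (by norm_num) (by norm_num) (by norm_num) : IntervalIntegrable (gI m) volume 0 1)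
  rw [piGen, hio]
  linarith

lemma A_reflect {m : ℕ} (hm : 1 ≤ m) {u : ℝ} (hu : -1 ≤ u) (hu' : u ≤ 1) :
    (∫ t in u..(1:ℝ), gI m t) + (∫ t in (-u)..(1:ℝ), gI m t) = piGen m := by
  have h1 : (∫ t in (-u)..(1:ℝ), gI m t) = ∫ t in (-1:ℝ)..u, gI m t := by
    have h := intervalIntegral.integral_comp_neg (a := (-1:ℝ)) (b := u) (f := gI m)
    simp only [gI_even, neg_neg] at h
    exact h.symm
  rw [h1, piGen_eq hm, add_comm]
  exact intervalIntegral.integral_add_adjacent_intervals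
    (gI_intInt hm (by norm_num) (by norm_num) hu hu')
    (gI_intInt hm hu hu' (by norm_num) (by norm_num))

lemma A_anti {m : ℕ} (hm : 1 ≤ m) {u v : ℝ} (hu : -1 ≤ u) (huv : u ≤ v) (hv : v ≤ 1) :
    (∫ t in v..(1:ℝ), gI m t) ≤ ∫ t in u..(1:ℝ), gI m t := by
  have hsplit := intervalIntegral.integral_add_adjacent_intervals
    (gI_intInt hm hu (huv.trans hv) (hu.trans huv) hv)
    (gI_intInt hm (hu.trans huv) hv (by norm_num) le_rfl)
  have hnn : 0 ≤ ∫ t in u..v, gI m t :=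
    intervalIntegral.integral_nonneg huv (fun t _ => gI_nonneg m t)
  linarith

noncomputable def gT (m : ℕ) (u : ℝ) : ℝ := u / Real.sqrt (1 - u ^ (2*m))

lemma gT_neg (m : ℕ) (u : ℝ) : gT m (-u) = - gT m u := by
  simp [gT, (even_two_mul m).neg_pow, neg_div]

lemma gT_mono_aux {m : ℕ} (hm : 1 ≤ m) {u v : ℝ} (h0 : 0 ≤ u) (huv : u ≤ v) (hv : v < 1) :
    gT m u ≤ gT m v := by
  have hu1 : u < 1 := lt_of_le_of_lt huv hv
  have h0v : 0 ≤ v := h0.trans huv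
  have hXu : 0 < 1 - u^(2*m) := by
    have := pow2m_lt_one hm (by linarith : (-1:ℝ) < u) hu1; linarith
  have hXv : 0 < 1 - v^(2*m) := by
    have := pow2m_lt_one hm (by linarith : (-1:ℝ) < v) hv; linarith
  rw [gT, gT, div_le_div_iff₀ (Real.sqrt_pos.mpr hXu) (Real.sqrt_pos.mpr hXv)]
  have key : u^2 * (1 - v^(2*m)) ≤ v^2 * (1 - u^(2*m)) := by
    have hp : u^2 ≤ v^2 := pow_le_pow_left₀ h0 huv 2
    have hq : u^(2*m) ≤ v^(2*m) := pow_le_pow_left₀ h0 huv _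
    nlinarith [hXv.le, sq_nonneg v]
  calc u * Real.sqrt (1 - v^(2*m)) = Real.sqrt (u^2 * (1 - v^(2*m))) := by
        rw [Real.sqrt_mul (sq_nonneg u), Real.sqrt_sq h0]
    _ ≤ Real.sqrt (v^2 * (1 - u^(2*m))) := Real.sqrt_le_sqrt key
    _ = v * Real.sqrt (1 - u^(2*m)) := by rw [Real.sqrt_mul (sq_nonneg v), Real.sqrt_sq h0v]

lemma gT_mono {m : ℕ} (hm : 1 ≤ m) {u v : ℝ} (hu : -1 < u) (huv : u ≤ v) (hv : v < 1) :
    gT m u ≤ gT m v := by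
  rcases le_total 0 u with h0u | hu0
  · exact gT_mono_aux hm h0u huv hv
  · rcases le_total 0 v with h0v | hv0
    · have h1 : gT m u ≤ 0 := div_nonpos_of_nonpos_of_nonneg hu0 (Real.sqrt_nonneg _)
      have h2 : 0 ≤ gT m v := div_nonneg h0v (Real.sqrt_nonneg _)
      linarith
    · have h := gT_mono_aux hm (by linarith : (0:ℝ) ≤ -v) (by linarith : -v ≤ -u)
        (by linarith : -u < 1)
      rw [gT_neg, gT_neg] at h
      linarith

lemma same_sign {g : ℝ → ℝ} (hg : Continuous g) {a b : ℝ} (hne : ∀ x ∈ Set.Icc a b, g x ≠ 0)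
    {x y : ℝ} (hx : x ∈ Set.Icc a b) (hy : y ∈ Set.Icc a b) (h0 : 0 < g x) : 0 < g y := by
  rcases (hne y hy).lt_or_gt with h | h
  · exfalso
    rcases le_total x y with hxy | hyx
    · obtain ⟨z, hz, hz0⟩ := intermediate_value_Icc' hxy hg.continuousOn ⟨h.le, h0.le⟩
      exact hne z ⟨hx.1.trans hz.1, hz.2.trans hy.2⟩ hz0
    · obtain ⟨z, hz, hz0⟩ := intermediate_value_Icc hyx hg.continuousOn ⟨h.le, h0.le⟩
      exact hne z ⟨hy.1.trans hz.1, hz.2.trans hx.2⟩ hz0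
  · exact h

lemma gs_energy {m : ℕ} (hm : 1 ≤ m) {s : ℝ → ℝ} (hs : IsGenSine m s) (x : ℝ) :
    (deriv s x) ^ 2 + s x ^ (2*m) = 1 := by
  obtain ⟨hcd, hODE, h0, h0'⟩ := hs
  have hs1 : Differentiable ℝ s := hcd.differentiable two_ne_zero
  have hds : Differentiable ℝ (deriv s) := by
    have h2 : ContDiff ℝ (1+1 : ℕ) s := by exact_mod_cast hcd
    exact (contDiff_succ_iff_deriv.mp (by exact_mod_cast h2)).2.2.differentiable one_ne_zero
  have hE' : ∀ y, HasDerivAt (fun x => (deriv s x)^2 + s x ^ (2*m)) 0 y := by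
    intro y
    have h1 : HasDerivAt (deriv s) (deriv (deriv s) y) y := (hds y).hasDerivAt
    have h2 : HasDerivAt s (deriv s y) y := (hs1 y).hasDerivAt
    have h3 := (h1.pow 2).add (h2.pow (2*m))
    convert h3 using 1
    · rfl
    · rfl
    · rfl
    rw [hODE y]
    have h4 : s y ^ (2*m - 1) * s y = s y ^ (2*m) := by
      rw [← pow_succ, show 2*m - 1 + 1 = 2*m from by omega]
    push_cast
    nlinarith [h4]
  have hconst := is_const_of_deriv_eq_zero (𝕜 := ℝ)
    (fun y => (hE' y).differentiableAt) (fun y => (hE' y).deriv) x 0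
  rw [h0, h0'] at hconst
  simpa [zero_pow (by omega : 2*m ≠ 0)] using hconst

lemma time_eq {m : ℕ} (hm : 1 ≤ m) {s : ℝ → ℝ} (hs1 : Differentiable ℝ s)
    (hds : Continuous (deriv s))
    (hE : ∀ x, (deriv s x) ^ 2 + s x ^ (2*m) = 1)
    {φ c : ℝ} (hφc : φ < c) (hpos : ∀ x ∈ Set.Ico φ c, 0 < deriv s x)
    (hc : deriv s c = 0) :
    s c = 1 ∧ (∫ t in (s φ)..(1:ℝ), gI m t) = c - φ := by
  have hbd : ∀ x ∈ Set.Ico φ c, -1 < s x ∧ s x < 1 := by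
    intro x hx
    have h1 : (0:ℝ) < (deriv s x)^2 := pow_pos (hpos x hx) 2
    have h2 : s x ^ (2*m) < 1 := by have := hE x; linarith
    exact neg_one_lt_of_pow h2
  have hmono : MonotoneOn s (Set.Icc φ c) := by
    apply monotoneOn_of_deriv_nonneg (convex_Icc φ c) hs1.continuous.continuousOn
      hs1.differentiableOn
    intro x hx
    rw [interior_Icc] at hx
    exact (hpos x ⟨hx.1.le, hx.2⟩).le
  have hφmem : φ ∈ Set.Ico φ c := ⟨le_rfl, hφc⟩
  have haφ := hbd φ hφmem
  have hsφc : s φ ≤ s c := hmono ⟨le_rfl, hφc.le⟩ ⟨hφc.le, le_rfl⟩ hφc.le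
  have hsc2 : s c ^ (2*m) = 1 := by
    have := hE c
    rw [hc] at this
    nlinarith
  have hsc : s c = 1 := by
    rcases lt_trichotomy (s c) 1 with h | h | h
    · exfalso
      have := pow2m_lt_one hm (by linarith [haφ.1]) h
      linarith
    · exact h
    · exfalso
      have h2 : (1:ℝ) < s c ^ (2*m) := one_lt_pow₀ h (by omega)
      linarith
  refine ⟨hsc, ?_⟩
  have key : ∀ x ∈ Set.Ico φ c, (∫ t in (s φ)..(s x), gI m t) = x - φ := by
    intro x hx
    have hφx : φ ≤ x := hx.1
    have hsub : Set.Icc φ x ⊆ Set.Ico φ c := fun t ht => ⟨ht.1, lt_of_le_of_lt ht.2 hx.2⟩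
    have hder : ∀ t ∈ Set.uIcc φ x, HasDerivAt s (deriv s t) t := fun t _ => (hs1 t).hasDerivAt
    have hcont : ContinuousOn (deriv s) (Set.uIcc φ x) := hds.continuousOn
    have hgc : ContinuousOn (gI m) (s '' Set.uIcc φ x) := by
      rintro y ⟨t, ht, rfl⟩
      rw [Set.uIcc_of_le hφx] at ht
      have hb := hbd t (hsub ht)
      have hppos : 0 < 1 - s t ^ (2*m) := by
        have := pow2m_lt_one hm hb.1 hb.2; linarith
      apply ContinuousAt.continuousWithinAt
      exact ContinuousAt.inv₀
        (Real.continuous_sqrt.comp (continuous_const.sub (continuous_pow _))).continuousAt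
        (Real.sqrt_pos.mpr hppos).ne'
    have hcv := intervalIntegral.integral_comp_smul_deriv' hder hcont hgc
    rw [← hcv]
    have hone : Set.EqOn (fun t => deriv s t • (gI m ∘ s) t) (fun _ => (1:ℝ)) (Set.uIcc φ x) := by
      intro t ht
      rw [Set.uIcc_of_le hφx] at ht
      have hpt := hpos t (hsub ht)
      have hsq : Real.sqrt (1 - s t ^ (2*m)) = deriv s t := by
        rw [show 1 - s t ^(2*m) = (deriv s t)^2 from by have := hE t; linarith,
          Real.sqrt_sq hpt.le]
      show deriv s t * (gI m (s t)) = 1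
      show deriv s t * (Real.sqrt (1 - s t ^ (2*m)))⁻¹ = 1
      rw [hsq]
      exact mul_inv_cancel₀ hpt.ne'
    rw [intervalIntegral.integral_congr hone]
    simp
  have hintOn : IntervalIntegrable (gI m) volume (s φ) 1 :=
    gI_intInt hm haφ.1.le haφ.2.le (by norm_num) le_rfl
  have hP : ContinuousOn (fun v => ∫ t in (s φ)..v, gI m t) (Set.uIcc (s φ) 1) :=
    intervalIntegral.continuousOn_primitive_interval ((intervalIntegrable_iff' (by simp)).mp hintOn)
  have hsφ1 : s φ ≤ 1 := haφ.2.le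
  have hmaps : Set.MapsTo s (Set.Icc φ c) (Set.uIcc (s φ) 1) := by
    intro x hx
    rw [Set.uIcc_of_le hsφ1]
    refine ⟨hmono ⟨le_rfl, hφc.le⟩ hx hx.1, ?_⟩
    have := hmono hx ⟨hφc.le, le_rfl⟩ hx.2
    linarith [hsc]
  have hc1mem : s c ∈ Set.uIcc (s φ) 1 := by rw [hsc]; exact Set.right_mem_uIcc
  have ht1 : Filter.Tendsto (fun x => ∫ t in (s φ)..(s x), gI m t) (𝓝[Set.Icc φ c] c)
      (𝓝 (∫ t in (s φ)..(1:ℝ), gI m t)) := by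
    have hcs : ContinuousWithinAt s (Set.Icc φ c) c := hs1.continuous.continuousWithinAt
    have hcw := ContinuousWithinAt.comp (hP _ hc1mem) hcs hmaps
    have := hcw.tendsto
    simpa [Function.comp_def, hsc] using this
  haveI hnb : (𝓝[Set.Ico φ c] c).NeBot :=
    (right_nhdsWithin_Ioo_neBot hφc).mono (nhdsWithin_mono c Set.Ioo_subset_Ico_self)
  have ht1' := ht1.mono_left (nhdsWithin_mono c Set.Ico_subset_Icc_self)
  have ht2 : Filter.Tendsto (fun x => x - φ) (𝓝[Set.Ico φ c] c) (𝓝 (c - φ)) :=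
    ((continuous_id.sub continuous_const).tendsto c).mono_left nhdsWithin_le_nhds
  have hev : (fun x => ∫ t in (s φ)..(s x), gI m t) =ᶠ[𝓝[Set.Ico φ c] c] (fun x => x - φ) :=
    Filter.eventuallyEq_of_mem self_mem_nhdsWithin key
  exact tendsto_nhds_unique (ht1'.congr' hev) ht2

lemma time_left_neg {m : ℕ} (hm : 1 ≤ m) {s : ℝ → ℝ} (hs1 : Differentiable ℝ s)
    (hds : Continuous (deriv s))
    (hE : ∀ x, (deriv s x) ^ 2 + s x ^ (2*m) = 1)
    {φ c : ℝ} (hφc : φ < c) (hneg : ∀ x ∈ Set.Ico φ c, deriv s x < 0)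
    (hc : deriv s c = 0) :
    s c = -1 ∧ (∫ t in (-(s φ))..(1:ℝ), gI m t) = c - φ := by
  have hd : (deriv fun x => -s x) = fun x => -deriv s x := funext fun x => deriv.neg
  have h := time_eq hm (s := fun x => -s x) hs1.neg (by rw [hd]; exact hds.neg)
    (by
      intro x
      rw [hd]
      simp only [neg_sq, (even_two_mul m).neg_pow]
      exact hE x)
    hφc
    (by
      intro x hx
      rw [hd]
      simp only
      linarith [hneg x hx])
    (by rw [hd]; simp [hc])
  obtain ⟨h1, h2⟩ := h
  exact ⟨by linarith, h2⟩

lemma time_right_neg {m : ℕ} (hm : 1 ≤ m) {s : ℝ → ℝ} (hs1 : Differentiable ℝ s)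
    (hds : Continuous (deriv s))
    (hE : ∀ x, (deriv s x) ^ 2 + s x ^ (2*m) = 1)
    {c ψ : ℝ} (hcψ : c < ψ) (hneg : ∀ x ∈ Set.Ioc c ψ, deriv s x < 0)
    (hc : deriv s c = 0) :
    s c = 1 ∧ (∫ t in (s ψ)..(1:ℝ), gI m t) = ψ - c := by
  have hd : (deriv fun x => s (-x)) = fun x => -deriv s (-x) :=
    funext fun x => deriv_comp_neg s x
  have h := time_eq hm (s := fun x => s (-x)) (hs1.comp differentiable_neg)
    (by rw [hd]; exact (hds.comp continuous_neg).neg)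
    (by
      intro x
      rw [hd]
      simp only [neg_sq]
      exact hE (-x))
    (show -ψ < -c by linarith)
    (by
      intro x hx
      rw [hd]
      simp only
      have hmem : -x ∈ Set.Ioc c ψ := ⟨by linarith [hx.2], by linarith [hx.1]⟩
      linarith [hneg _ hmem])
    (by rw [hd]; simp [hc])
  obtain ⟨h1, h2⟩ := h
  simp only [neg_neg] at h1 h2
  refine ⟨h1, ?_⟩
  rw [h2]
  ring

lemma time_right_pos {m : ℕ} (hm : 1 ≤ m) {s : ℝ → ℝ} (hs1 : Differentiable ℝ s)
    (hds : Continuous (deriv s))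
    (hE : ∀ x, (deriv s x) ^ 2 + s x ^ (2*m) = 1)
    {c ψ : ℝ} (hcψ : c < ψ) (hpos : ∀ x ∈ Set.Ioc c ψ, 0 < deriv s x)
    (hc : deriv s c = 0) :
    s c = -1 ∧ (∫ t in (-(s ψ))..(1:ℝ), gI m t) = ψ - c := by
  have hd : (deriv fun x => -s x) = fun x => -deriv s x := funext fun x => deriv.neg
  have h := time_right_neg hm (s := fun x => -s x) hs1.neg (by rw [hd]; exact hds.neg)
    (by
      intro x
      rw [hd]
      simp only [neg_sq, (even_two_mul m).neg_pow]
      exact hE x)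
    hcψ
    (by
      intro x hx
      rw [hd]
      simp only
      linarith [hpos x hx])
    (by rw [hd]; simp [hc])
  obtain ⟨h1, h2⟩ := h
  exact ⟨by linarith, h2⟩

lemma no_zero_case {m : ℕ} (hm : 1 ≤ m) {s : ℝ → ℝ} (hs : IsGenSine m s)
    {φ ζ : ℝ} (hζ0 : 0 < ζ)
    (hne : ∀ x ∈ Set.Icc φ (ζ + φ), deriv s x ≠ 0)
    (heq : s (ζ + φ) / deriv s (ζ + φ) - s φ / deriv s φ = ζ) : False := by
  have hcd := hs.1
  have hODE := hs.2.1
  have hs1 : Differentiable ℝ s := hcd.differentiable two_ne_zero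
  have hds2 : Differentiable ℝ (deriv s) := by
    have h2 : ContDiff ℝ (1+1 : ℕ) s := by exact_mod_cast hcd
    exact (contDiff_succ_iff_deriv.mp (by exact_mod_cast h2)).2.2.differentiable one_ne_zero
  set ψ := ζ + φ with hψdef
  have hφψ : φ < ψ := by rw [hψdef]; linarith
  set F : ℝ → ℝ := fun x => s x / deriv s x - x with hF
  have hFd : ∀ x ∈ Set.Icc φ ψ, HasDerivAt F ((m : ℝ) * s x ^ (2*m) / (deriv s x)^2) x := by
    intro x hx
    have hne' := hne x hx
    have h1 : HasDerivAt s (deriv s x) x := (hs1 x).hasDerivAt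
    have h2 : HasDerivAt (deriv s) (deriv (deriv s) x) x := (hds2 x).hasDerivAt
    have h3 := (h1.div h2 hne').sub (hasDerivAt_id x)
    convert h3 using 1
    · rfl
    · rfl
    · rfl
    rw [hODE x]
    have h4 : s x * s x ^ (2*m - 1) = s x ^ (2*m) := by
      rw [← pow_succ', show 2*m - 1 + 1 = 2*m from by omega]
    field_simp
    nlinarith [h4, sq_nonneg (deriv s x)]
  have hFc : ContinuousOn F (Set.Icc φ ψ) :=
    fun x hx => ((hFd x hx).continuousAt).continuousWithinAt
  have hFm : MonotoneOn F (Set.Icc φ ψ) := by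
    apply monotoneOn_of_deriv_nonneg (convex_Icc _ _) hFc
    · intro x hx
      rw [interior_Icc] at hx
      exact ((hFd x (Set.Ioo_subset_Icc_self hx)).differentiableAt).differentiableWithinAt
    · intro x hx
      rw [interior_Icc] at hx
      rw [(hFd x (Set.Ioo_subset_Icc_self hx)).deriv]
      exact div_nonneg (mul_nonneg (Nat.cast_nonneg m) ((even_two_mul m).pow_nonneg _))
        (sq_nonneg _)
  have hFeq : F ψ = F φ := by
    simp only [hF]
    have : ψ = ζ + φ := hψdef
    nlinarith [heq]
  have hconst : ∀ x ∈ Set.Icc φ ψ, F x = F φ := by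
    intro x hx
    have hle1 := hFm hx ⟨hφψ.le, le_rfl⟩ hx.2
    have hle2 := hFm ⟨le_rfl, hφψ.le⟩ hx hx.1
    rw [hFeq] at hle1
    linarith
  have hmid : ∀ x ∈ Set.Ioo φ ψ, s x = 0 := by
    intro x hx
    have hnb : Set.Ioo φ ψ ∈ 𝓝 x := (isOpen_Ioo).mem_nhds hx
    have hloc : F =ᶠ[𝓝 x] fun _ => F φ :=
      Filter.eventuallyEq_of_mem hnb (fun y hy => hconst y (Set.Ioo_subset_Icc_self hy))
    have h0 : HasDerivAt F 0 x :=
      (hasDerivAt_const x (F φ)).congr_of_eventuallyEq hloc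
    have h1 := (hFd x (Set.Ioo_subset_Icc_self hx)).unique h0
    have hne' := hne x (Set.Ioo_subset_Icc_self hx)
    have hm0 : (m:ℝ) ≠ 0 := Nat.cast_ne_zero.mpr (by omega)
    have h2 : s x ^ (2*m) = 0 := by
      field_simp at h1
      rw [mul_zero] at h1
      exact (mul_eq_zero.mp h1).resolve_left hm0
    exact pow_eq_zero_iff (by omega : 2*m ≠ 0) |>.mp h2
  set x0 := φ + ζ/2 with hx0def
  have hx0 : x0 ∈ Set.Ioo φ ψ := ⟨by rw [hx0def]; linarith, by rw [hx0def, hψdef]; linarith⟩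
  have hsl : s =ᶠ[𝓝 x0] fun _ => 0 :=
    Filter.eventuallyEq_of_mem ((isOpen_Ioo).mem_nhds hx0) hmid
  have h0 : HasDerivAt s 0 x0 := (hasDerivAt_const x0 (0:ℝ)).congr_of_eventuallyEq hsl
  have hfin := (hs1 x0).hasDerivAt.unique h0
  exact hne x0 (Set.Ioo_subset_Icc_self hx0) hfin

lemma key {m : ℕ} (hm : 1 ≤ m) {s : ℝ → ℝ} (hs : IsGenSine m s) {φ ζ : ℝ}
    (hζ0 : 0 < ζ) (hζπ : ζ < piGen m)
    (hφ : deriv s φ ≠ 0) (hζφ : deriv s (ζ + φ) ≠ 0)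
    (heq : s (ζ + φ) / deriv s (ζ + φ) - s φ / deriv s φ = ζ) : False := by
  have hE : ∀ x, (deriv s x)^2 + s x ^(2*m) = 1 := gs_energy hm hs
  have hs1 : Differentiable ℝ s := hs.1.differentiable two_ne_zero
  have hds : Continuous (deriv s) := hs.1.continuous_deriv one_le_two
  set ψ := ζ + φ with hψdef
  have hφψ : φ < ψ := by rw [hψdef]; linarith
  by_cases hK : ∃ x ∈ Set.Icc φ ψ, deriv s x = 0
  swap
  · push_neg at hK
    exact no_zero_case hm hs hζ0 hK heq
  obtain ⟨xK, hxKmem, hxK0⟩ := hK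
  set K : Set ℝ := Set.Icc φ ψ ∩ deriv s ⁻¹' {0} with hKdef
  have hKne : K.Nonempty := ⟨xK, hxKmem, hxK0⟩
  have hKcl : IsClosed K := isClosed_Icc.inter (isClosed_singleton.preimage hds)
  have hKsub : K ⊆ Set.Icc φ ψ := Set.inter_subset_left
  have hKbb : BddBelow K := (bddBelow_Icc (a := ψ) (b := φ)).mono hKsub
  have hKba : BddAbove K := (bddAbove_Icc (a := φ) (b := ψ)).mono hKsub
  set c₁ := sInf K with hc₁def
  set c₂ := sSup K with hc₂def
  have hc₁K : c₁ ∈ K := hKcl.csInf_mem hKne hKbb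
  have hc₂K : c₂ ∈ K := hKcl.csSup_mem hKne hKba
  have hc₁0 : deriv s c₁ = 0 := hc₁K.2
  have hc₂0 : deriv s c₂ = 0 := hc₂K.2
  have hφc₁ : φ < c₁ := lt_of_le_of_ne hc₁K.1.1 (fun h => hφ (h ▸ hc₁0))
  have hc₂ψ : c₂ < ψ := lt_of_le_of_ne hc₂K.1.2 (fun h => hζφ (h.symm ▸ hc₂0))
  have hc₁₂ : c₁ ≤ c₂ := csInf_le_csSup hKne hKbb hKba
  have hne₁ : ∀ x ∈ Set.Ico φ c₁, deriv s x ≠ 0 := by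
    intro x hx h0
    have hxle : c₁ ≤ x := csInf_le hKbb ⟨⟨hx.1, hx.2.le.trans hc₁K.1.2⟩, h0⟩
    exact absurd hx.2 (not_lt.mpr hxle)
  have hne₂ : ∀ x ∈ Set.Ioc c₂ ψ, deriv s x ≠ 0 := by
    intro x hx h0
    have hxle : x ≤ c₂ := le_csSup hKba ⟨⟨hc₂K.1.1.trans hx.1.le, hx.2⟩, h0⟩
    exact absurd hx.1 (not_lt.mpr hxle)
  -- basic bounds on endpoints values
  have hsqposφ : (0:ℝ) < (deriv s φ)^2 := by positivity
  have hsqposψ : (0:ℝ) < (deriv s ψ)^2 := by positivity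
  have habsφ : -1 < s φ ∧ s φ < 1 := neg_one_lt_of_pow (m := m) (by nlinarith [hE φ])
  have habsψ : -1 < s ψ ∧ s ψ < 1 := neg_one_lt_of_pow (m := m) (by nlinarith [hE ψ])
  have hsqφ : Real.sqrt (1 - s φ ^(2*m)) = |deriv s φ| := by
    rw [show 1 - s φ^(2*m) = (deriv s φ)^2 from by nlinarith [hE φ], Real.sqrt_sq_eq_abs]
  have hsqψ : Real.sqrt (1 - s ψ ^(2*m)) = |deriv s ψ| := by
    rw [show 1 - s ψ^(2*m) = (deriv s ψ)^2 from by nlinarith [hE ψ], Real.sqrt_sq_eq_abs]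
  -- sign constancy helpers
  have hsgnL : ∀ σ : Bool, True := fun _ => trivial
  -- left signs
  rcases hφ.lt_or_gt with hφneg | hφpos
  · -- deriv s φ < 0 near φ
    have hsgn₁ : ∀ x ∈ Set.Ico φ c₁, deriv s x < 0 := by
      intro x hx
      have h := same_sign (g := fun y => -deriv s y) hds.neg (a := φ) (b := x)
        (fun t ht => neg_ne_zero.mpr (hne₁ t ⟨ht.1, lt_of_le_of_lt ht.2 hx.2⟩))
        (Set.left_mem_Icc.mpr hx.1) (Set.right_mem_Icc.mpr hx.1) (by simpa using hφneg)
      simpa using h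
    obtain ⟨hsc₁, hA₁⟩ := time_left_neg hm hs1 hds hE hφc₁ hsgn₁ hc₁0
    have htanφ : s φ / deriv s φ = - gT m (s φ) := by
      rw [gT, hsqφ, abs_of_neg hφneg]
      field_simp
    rcases hζφ.lt_or_gt with hψneg | hψpos
    · -- (−,−)
      have hsgn₂ : ∀ x ∈ Set.Ioc c₂ ψ, deriv s x < 0 := by
        intro x hx
        have h := same_sign (g := fun y => -deriv s y) hds.neg (a := x) (b := ψ)
          (fun t ht => neg_ne_zero.mpr (hne₂ t ⟨lt_of_lt_of_le hx.1 ht.1, ht.2⟩))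
          (Set.right_mem_Icc.mpr hx.2) (Set.left_mem_Icc.mpr hx.2) (by simpa using hψneg)
        simpa using h
      obtain ⟨-, hA₂⟩ := time_right_neg hm hs1 hds hE hc₂ψ hsgn₂ hc₂0
      have htanψ : s ψ / deriv s ψ = - gT m (s ψ) := by
        rw [gT, hsqψ, abs_of_neg hψneg]
        field_simp
      -- integrals: A(-a) + A(b) ≤ ζ < piGen = A(b) + A(-b) ⇒ A(-a) < A(-b) ⇒ a < b
      have hπ := A_reflect hm habsψ.1.le habsψ.2.le
      have hab : s φ < s ψ := by
        by_contra hcon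
        push_neg at hcon
        have := A_anti hm (u := -(s φ)) (v := -(s ψ)) (by linarith [habsφ.2])
          (by linarith) (by linarith [habsψ.1])
        linarith
      -- tangents: -gT b + gT a = ζ > 0 but gT a ≤ gT b
      have hT := gT_mono hm habsφ.1 hab.le habsψ.2
      rw [htanφ, htanψ] at heq
      linarith
    · -- (−,+)
      have hsgn₂ : ∀ x ∈ Set.Ioc c₂ ψ, 0 < deriv s x := by
        intro x hx
        exact same_sign hds (a := x) (b := ψ)
          (fun t ht => hne₂ t ⟨lt_of_lt_of_le hx.1 ht.1, ht.2⟩)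
          (Set.right_mem_Icc.mpr hx.2) (Set.left_mem_Icc.mpr hx.2) hψpos
      obtain ⟨-, hA₂⟩ := time_right_pos hm hs1 hds hE hc₂ψ hsgn₂ hc₂0
      have htanψ : s ψ / deriv s ψ = gT m (s ψ) := by
        rw [gT, hsqψ, abs_of_pos hψpos]
      -- integrals: A(-a) + A(-b) ≤ ζ < piGen = A(-a) + A(a) ⇒ A(-b) < A(a) ⇒ a < -b
      have hπ := A_reflect hm habsφ.1.le habsφ.2.le
      have hab : s φ < -(s ψ) := by
        by_contra hcon
        push_neg at hcon
        have := A_anti hm (u := -(s ψ)) (v := s φ) (by linarith [habsψ.2])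
          (by linarith) habsφ.2.le
        linarith
      have hT := gT_mono hm habsφ.1 hab.le (by linarith [habsψ.1])
      rw [gT_neg] at hT
      rw [htanφ, htanψ] at heq
      linarith
  · -- deriv s φ > 0 near φ
    have hsgn₁ : ∀ x ∈ Set.Ico φ c₁, 0 < deriv s x := by
      intro x hx
      exact same_sign hds (a := φ) (b := x)
        (fun t ht => hne₁ t ⟨ht.1, lt_of_le_of_lt ht.2 hx.2⟩)
        (Set.left_mem_Icc.mpr hx.1) (Set.right_mem_Icc.mpr hx.1) hφpos
    obtain ⟨hsc₁, hA₁⟩ := time_eq hm hs1 hds hE hφc₁ hsgn₁ hc₁0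
    have htanφ : s φ / deriv s φ = gT m (s φ) := by
      rw [gT, hsqφ, abs_of_pos hφpos]
    rcases hζφ.lt_or_gt with hψneg | hψpos
    · -- (+,−)
      have hsgn₂ : ∀ x ∈ Set.Ioc c₂ ψ, deriv s x < 0 := by
        intro x hx
        have h := same_sign (g := fun y => -deriv s y) hds.neg (a := x) (b := ψ)
          (fun t ht => neg_ne_zero.mpr (hne₂ t ⟨lt_of_lt_of_le hx.1 ht.1, ht.2⟩))
          (Set.right_mem_Icc.mpr hx.2) (Set.left_mem_Icc.mpr hx.2) (by simpa using hψneg)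
        simpa using h
      obtain ⟨-, hA₂⟩ := time_right_neg hm hs1 hds hE hc₂ψ hsgn₂ hc₂0
      have htanψ : s ψ / deriv s ψ = - gT m (s ψ) := by
        rw [gT, hsqψ, abs_of_neg hψneg]
        field_simp
      -- integrals: A(a) + A(b) ≤ ζ < piGen = A(a) + A(-a) ⇒ A(b) < A(-a) ⇒ -a < b
      have hπ := A_reflect hm habsφ.1.le habsφ.2.le
      have hab : -(s φ) < s ψ := by
        by_contra hcon
        push_neg at hcon
        have := A_anti hm (u := s ψ) (v := -(s φ)) habsψ.1.le hcon (by linarith [habsφ.1])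
        linarith
      have hT := gT_mono hm (by linarith [habsφ.2]) hab.le habsψ.2
      rw [gT_neg] at hT
      rw [htanφ, htanψ] at heq
      linarith
    · -- (+,+)
      have hsgn₂ : ∀ x ∈ Set.Ioc c₂ ψ, 0 < deriv s x := by
        intro x hx
        exact same_sign hds (a := x) (b := ψ)
          (fun t ht => hne₂ t ⟨lt_of_lt_of_le hx.1 ht.1, ht.2⟩)
          (Set.right_mem_Icc.mpr hx.2) (Set.left_mem_Icc.mpr hx.2) hψpos
      obtain ⟨-, hA₂⟩ := time_right_pos hm hs1 hds hE hc₂ψ hsgn₂ hc₂0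
      have htanψ : s ψ / deriv s ψ = gT m (s ψ) := by
        rw [gT, hsqψ, abs_of_pos hψpos]
      -- integrals: A(a) + A(-b) ≤ ζ < piGen = A(a) + A(-a) ⇒ A(-b) < A(-a) ⇒ b < a
      have hπ := A_reflect hm habsφ.1.le habsφ.2.le
      have hab : s ψ < s φ := by
        by_contra hcon
        push_neg at hcon
        have := A_anti hm (u := -(s ψ)) (v := -(s φ)) (by linarith [habsψ.2])
          (by linarith) (by linarith [habsφ.1])
        linarith
      have hT := gT_mono hm habsψ.1 hab.le habsφ.2
      rw [htanφ, htanψ] at heq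
      linarith


/-- uniqueness of the trivial solution of the tangent equation:
if `s'(φ) ≠ 0`, `s'(ζ + φ) ≠ 0`, `|ζ| < π_m` and
`tan_m(ζ + φ) - tan_m(φ) = ζ` (with `tan_m = s/s'`), then `ζ = 0`. -/
theorem generalized_tangent_equation (m : ℕ) (hm : 1 ≤ m) (s : ℝ → ℝ)
    (hs : IsGenSine m s) (φ ζ : ℝ)
    (hφ : deriv s φ ≠ 0) (hζφ : deriv s (ζ + φ) ≠ 0) (hζ : |ζ| < piGen m)
    (heq : s (ζ + φ) / deriv s (ζ + φ) - s φ / deriv s φ = ζ) :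
    ζ = 0 := by
  rcases lt_trichotomy ζ 0 with hneg | hzero | hpos
  · exfalso
    have h1 : deriv s (-ζ + (ζ + φ)) ≠ 0 := by
      rw [show -ζ + (ζ + φ) = φ by ring]
      exact hφ
    apply key hm hs (φ := ζ + φ) (ζ := -ζ) (by linarith)
      (by rwa [abs_of_neg hneg] at hζ) hζφ h1
    rw [show -ζ + (ζ + φ) = φ by ring]
    linarith
  · exact hzero
  · exact absurd (key hm hs hpos (by rwa [abs_of_pos hpos] at hζ) hφ hζφ heq) not_false
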